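/- Let h(z₁,z₂) = (z₁, z₂ + 1/(1-z₁)) on the unit ball 𝔹² ⊂ ℂ². Then h is biholomorphic onto its image, det Dh(z) = 1 for all z ∈ 𝔹², and sup_{z∈𝔹²} ‖Dh(z)‖ = ∞. In particular, there is no constant C with ‖Dh(z)‖ ≤ C|det Dh(z)|^{1/2} for all z. -/

import Mathlib

/-- The map `h(z₁,z₂) = (z₁, z₂ + 1/(1-z₁))` on `𝔹² ⊂ ℂ²`. -/
noncomputable def h17 (z : EuclideanSpace ℂ (Fin 2)) : EuclideanSpace ℂ (Fin 2) :=
  (EuclideanSpace.equiv (Fin 2) ℂ).symm ![z 0, z 1 + (1 - z 0)⁻¹]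

/-- The complex Jacobian matrix of `h17` at `z`. -/
noncomputable def Dh17 (z : EuclideanSpace ℂ (Fin 2)) : Matrix (Fin 2) (Fin 2) ℂ :=
  fun i j => fderiv ℂ (fun w => h17 w i) z (EuclideanSpace.single j 1)

/-- The `ℓ²` operator norm of an `n×n` complex matrix. -/
noncomputable def opNorm {n : ℕ} (M : Matrix (Fin n) (Fin n) ℂ) : ℝ :=
  ‖(Matrix.toEuclideanCLM (𝕜 := ℂ) M : EuclideanSpace ℂ (Fin n) →L[ℂ] EuclideanSpace ℂ (Fin n))‖

/-!
`h` is a shear: it keeps `z₁` and translates `z₂` by a holomorphic function of `z₁`, so it is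
injective and its Jacobian is the unipotent matrix `[[1, 0], [(1 - z₁)⁻², 1]]`. Its determinant
is `1`, while the off-diagonal entry, which bounds the operator norm from below, blows up as
`z₁ → 1` inside the ball.
-/

open Metric

lemma one_sub_ne_zero_of_mem_ball {z : EuclideanSpace ℂ (Fin 2)} (hz : z ∈ ball 0 1) :
    1 - z 0 ≠ 0 := by
  have hz0 : ‖z 0‖ < 1 := (PiLp.norm_apply_le z 0).trans_lt (mem_ball_zero_iff.mp hz)
  intro h
  rw [← sub_eq_zero.mp h, norm_one] at hz0
  exact lt_irrefl _ hz0

lemma h17_injective : Function.Injective h17 := by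
  intro z w h
  have h0 : z 0 = w 0 := congrArg (· 0) h
  have h1 : z 1 + (1 - z 0)⁻¹ = w 1 + (1 - w 0)⁻¹ := congrArg (· 1) h
  rw [h0, add_left_inj] at h1
  ext i
  fin_cases i
  exacts [h0, h1]

lemma hasFDerivAt_h17_snd {z : EuclideanSpace ℂ (Fin 2)} (hz : 1 - z 0 ≠ 0) :
    HasFDerivAt (fun w => h17 w 1)
      (EuclideanSpace.proj 1 + ((1 - z 0) ^ 2)⁻¹ • EuclideanSpace.proj (𝕜 := ℂ) 0) z := by
  have hinv : HasDerivAt (fun x : ℂ => (1 - x)⁻¹) ((1 - z 0) ^ 2)⁻¹ (z 0) := by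
    have := ((hasDerivAt_id (z 0)).const_sub 1).inv hz
    rwa [neg_neg, one_div] at this
  have hinv_fst : HasFDerivAt (fun w : EuclideanSpace ℂ (Fin 2) => (1 - w 0)⁻¹)
      (((1 - z 0) ^ 2)⁻¹ • EuclideanSpace.proj (𝕜 := ℂ) 0) z :=
    (hinv.comp_hasFDerivAt z (EuclideanSpace.proj (𝕜 := ℂ) (0 : Fin 2)).hasFDerivAt :)
  exact (EuclideanSpace.proj (𝕜 := ℂ) 1).hasFDerivAt.add hinv_fst

lemma differentiableAt_h17 {z : EuclideanSpace ℂ (Fin 2)} (hz : 1 - z 0 ≠ 0) :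
    DifferentiableAt ℂ h17 z := by
  have hcoord : DifferentiableAt ℂ (fun w => (![w 0, w 1 + (1 - w 0)⁻¹] : Fin 2 → ℂ)) z := by
    rw [differentiableAt_pi]
    intro i
    fin_cases i
    · exact (EuclideanSpace.proj (𝕜 := ℂ) 0).differentiableAt
    · exact (hasFDerivAt_h17_snd hz).differentiableAt
  exact (EuclideanSpace.equiv (Fin 2) ℂ).symm.differentiableAt.comp z hcoord

lemma Dh17_eq {z : EuclideanSpace ℂ (Fin 2)} (hz : 1 - z 0 ≠ 0) :
    Dh17 z = !![1, 0; ((1 - z 0) ^ 2)⁻¹, 1] := by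
  have hfst : fderiv ℂ (fun w => h17 w 0) z = EuclideanSpace.proj 0 :=
    (EuclideanSpace.proj (𝕜 := ℂ) (0 : Fin 2)).fderiv
  ext i j
  fin_cases i <;> fin_cases j <;>
    simp [Dh17, hfst, (hasFDerivAt_h17_snd hz).fderiv]

lemma det_Dh17 {z : EuclideanSpace ℂ (Fin 2)} (hz : 1 - z 0 ≠ 0) : (Dh17 z).det = 1 := by
  rw [Dh17_eq hz, Matrix.det_fin_two_of]
  ring

lemma norm_entry_le_opNorm {n : ℕ} (M : Matrix (Fin n) (Fin n) ℂ) (i j : Fin n) :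
    ‖M i j‖ ≤ opNorm M := by
  set T := Matrix.toEuclideanCLM (𝕜 := ℂ) M
  have hcol : T (EuclideanSpace.single j 1) i = M i j := by
    simp [T, ← PiLp.toLp_single, Matrix.mulVec_single]
  calc ‖M i j‖ = ‖T (EuclideanSpace.single j 1) i‖ := by rw [hcol]
    _ ≤ ‖T (EuclideanSpace.single j 1)‖ := PiLp.norm_apply_le _ i
    _ ≤ ‖T‖ := by simpa using T.le_opNorm (EuclideanSpace.single j 1)

lemma exists_mem_ball_lt_opNorm_Dh17 (C : ℝ) : ∃ z ∈ ball 0 1, C < opNorm (Dh17 z) := by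
  set r : ℝ := |C| + 1
  have hr : 1 ≤ r := le_add_of_nonneg_left (abs_nonneg C)
  have hr_inv_pos : 0 < r⁻¹ := by positivity
  have hr_inv_le : r⁻¹ ≤ 1 := inv_le_one_of_one_le₀ hr
  -- the point `(1 - 1/r, 0)`, where `(1 - z₁)⁻² = r²`
  set z : EuclideanSpace ℂ (Fin 2) := EuclideanSpace.single 0 ((1 - r⁻¹ : ℝ) : ℂ)
  have hz : z ∈ ball 0 1 := by
    rw [mem_ball_zero_iff, PiLp.norm_single, Complex.norm_real, Real.norm_eq_abs,
      abs_of_nonneg (sub_nonneg.mpr hr_inv_le)]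
    linarith
  have hsub : 1 - z 0 = (r⁻¹ : ℝ) := by simp [z]
  refine ⟨z, hz, ?_⟩
  calc C < r := (le_abs_self C).trans_lt (lt_add_one _)
    _ ≤ r ^ 2 := by nlinarith
    _ = ‖Dh17 z 1 0‖ := by
      rw [Dh17_eq (one_sub_ne_zero_of_mem_ball hz), hsub]
      simp [abs_of_pos (zero_lt_one.trans_le hr)]
    _ ≤ opNorm (Dh17 z) := norm_entry_le_opNorm _ 1 0

/-- The map `h(z₁,z₂) = (z₁, z₂ + 1/(1-z₁))` is holomorphic and injective on `𝔹²` (hence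
biholomorphic onto its image), has `det Dh ≡ 1`, but `sup ‖Dh‖ = ∞`; in particular there is
no constant `C` with `‖Dh(z)‖ ≤ C |det Dh(z)|^{1/2}` on `𝔹²`. -/
theorem stmt17 :
    Set.InjOn h17 (Metric.ball 0 1) ∧
    DifferentiableOn ℂ h17 (Metric.ball 0 1) ∧
    (∀ z ∈ Metric.ball (0 : EuclideanSpace ℂ (Fin 2)) 1, (Dh17 z).det = 1) ∧
    (¬ ∃ C : ℝ, ∀ z ∈ Metric.ball (0 : EuclideanSpace ℂ (Fin 2)) 1, opNorm (Dh17 z) ≤ C) ∧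
    (¬ ∃ C : ℝ, ∀ z ∈ Metric.ball (0 : EuclideanSpace ℂ (Fin 2)) 1,
      opNorm (Dh17 z) ≤ C * ‖(Dh17 z).det‖ ^ ((1 : ℝ) / 2)) := by
  have hdet : ∀ z ∈ ball (0 : EuclideanSpace ℂ (Fin 2)) 1, (Dh17 z).det = 1 :=
    fun z hz => det_Dh17 (one_sub_ne_zero_of_mem_ball hz)
  have hunbdd : ¬ ∃ C : ℝ, ∀ z ∈ ball (0 : EuclideanSpace ℂ (Fin 2)) 1, opNorm (Dh17 z) ≤ C := by
    rintro ⟨C, hC⟩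
    obtain ⟨z, hz, hlt⟩ := exists_mem_ball_lt_opNorm_Dh17 C
    exact (hC z hz).not_gt hlt
  refine ⟨h17_injective.injOn,
    fun z hz => (differentiableAt_h17 (one_sub_ne_zero_of_mem_ball hz)).differentiableWithinAt,
    hdet, hunbdd, ?_⟩
  rintro ⟨C, hC⟩
  refine hunbdd ⟨C, fun z hz => ?_⟩
  simpa [hdet z hz] using hC z hz
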